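/- Let α > 0, β > 0, ρ > 0 and λ ∈ ℝ, and let s > 0 satisfy |λ| < s^α. Then ∫_0^∞ e^{−st} · t^{β−1} · E_{α,β}^ρ(λ t^α) dt converges and equals s^{αρ−β} / (s^α − λ)^ρ. -/

import Mathlib

open Real Set Filter MeasureTheory

/-! Expanding `E_{α,β}^ρ` termwise, the `k`-th term of the integrand is a multiple of
`e^{-st} t^{αk+β-1}`, whose Laplace transform `Γ(αk+β) s^{-(αk+β)}` cancels the `Γ(αk+β)` of the
coefficient. What is left is the binomial series `∑ Ring.choose (ρ+k-1) k x^k = (1-x)^{-ρ}` at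
`x = λ s^{-α}`; its coefficients are positive and `|x| < 1`, so the integrated series converges
absolutely, which justifies exchanging sum and integral and gives the integrability. -/

/-- Poles of `Γ` at `a * k + b` behave as zeros of the entire function `1 / Γ`, since
`Real.Gamma` vanishes at nonpositive integers and division by zero is zero. -/
noncomputable def mlf (a b r : ℝ) (x : ℝ) : ℝ :=
  ∑' k : ℕ, Real.Gamma (r + k) / (Real.Gamma r * Real.Gamma (a * k + b)) * x ^ k /
    (Nat.factorial k : ℝ)

theorem Real.Gamma_add_nat_eq_mul_ascPochhammer {r : ℝ} (hr : ∀ k : ℕ, r ≠ -k) (n : ℕ) :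
    Gamma (r + n) = Gamma r * (ascPochhammer ℝ n).eval r := by
  induction n with
  | zero => simp
  | succ n ih =>
    have hrn : r + n ≠ 0 := fun h ↦ hr n (by linarith)
    rw [Nat.cast_succ, ← add_assoc, Gamma_add_one hrn, ih, ascPochhammer_succ_eval]
    ring

theorem Ring.choose_add_nat_sub_one_eq_Gamma {r : ℝ} (hr : ∀ k : ℕ, r ≠ -k) (n : ℕ) :
    Ring.choose (r + n - 1) n = Gamma (r + n) / (Gamma r * n.factorial) := by
  have hΓ : Gamma r ≠ 0 := Gamma_ne_zero hr
  rw [Ring.choose_eq_smul, Polynomial.descPochhammer_smeval_eq_ascPochhammer,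
    Polynomial.ascPochhammer_smeval_eq_eval, Gamma_add_nat_eq_mul_ascPochhammer hr, smul_eq_mul,
    show r + n - 1 - n + 1 = r by ring]
  field_simp

theorem Real.hasSum_choose_mul_pow {x : ℝ} (r : ℝ) (hx : |x| < 1) :
    HasSum (fun n : ℕ => Ring.choose (r + n - 1) n * x ^ n) ((1 - x) ^ (-r)) := by
  have := (one_div_one_sub_rpow_hasFPowerSeriesOnBall_zero r).hasSum
    (y := x) (by simpa [enorm_eq_nnnorm, ← NNReal.coe_lt_one] using hx)
  have h1x : 0 ≤ 1 - x := by linarith [le_abs_self x]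
  simpa [FormalMultilinearSeries.ofScalars_apply_eq, mul_comm, rpow_neg h1x] using this

theorem MeasureTheory.integrable_tsum_of_summable_integral_norm {α E ι : Type*}
    [MeasurableSpace α] {μ : Measure α} [NormedAddCommGroup E] [CompleteSpace E] [Countable ι]
    {F : ι → α → E} (hF_int : ∀ i, Integrable (F i) μ)
    (hF_sum : Summable fun i ↦ ∫ a, ‖F i a‖ ∂μ) :
    Integrable (fun a ↦ ∑' i, F i a) μ := by
  have h_lint : ∫⁻ a, ∑' i, ‖F i a‖ₑ ∂μ < ⊤ := by
    rw [lintegral_tsum fun i ↦ (hF_int i).1.enorm]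
    have (i : ι) : ∫⁻ a, ‖F i a‖ₑ ∂μ = ENNReal.ofReal (∫ a, ‖F i a‖ ∂μ) :=
      (ofReal_integral_norm_eq_lintegral_enorm (hF_int i)).symm
    simp_rw [this, ← ENNReal.ofReal_tsum_of_nonneg (fun i ↦ integral_nonneg fun _ ↦ norm_nonneg _)
      hF_sum]
    exact ENNReal.ofReal_lt_top
  have h_summable : ∀ᵐ a ∂μ, Summable fun i ↦ F i a := by
    filter_upwards [ae_lt_top' (AEMeasurable.tsum fun i ↦ (hF_int i).1.enorm) h_lint.ne]
      with a ha
    exact .of_norm (tsum_enorm_ne_top_iff_summable_norm.1 ha.ne)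
  refine ⟨aestronglyMeasurable_of_tendsto_ae atTop
    (fun s : Finset ι ↦ Finset.aestronglyMeasurable_fun_sum s fun i _ ↦ (hF_int i).1) ?_, ?_⟩
  · filter_upwards [h_summable] with a ha using ha.hasSum
  · exact (lintegral_mono fun a ↦ enorm_tsum_le_tsum_enorm).trans_lt h_lint

theorem Real.integral_exp_neg_mul_mul_rpow {s c : ℝ} (hs : 0 < s) (hc : 0 < c) :
    ∫ t in Ioi 0, exp (-(s * t)) * t ^ (c - 1) = Gamma c * s ^ (-c) := by
  simp_rw [mul_comm (exp _), integral_rpow_mul_exp_neg_mul_Ioi hc hs, one_div,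
    inv_rpow hs.le, rpow_neg hs.le, mul_comm]

theorem Real.integrableOn_exp_neg_mul_mul_rpow {s c : ℝ} (hs : 0 < s) (hc : 0 < c) :
    IntegrableOn (fun t ↦ exp (-(s * t)) * t ^ (c - 1)) (Ioi 0) :=
  .of_integral_ne_zero (by rw [integral_exp_neg_mul_mul_rpow hs hc]; positivity)

noncomputable def laplaceMlfTerm (a b r lam s : ℝ) (k : ℕ) (t : ℝ) : ℝ :=
  Ring.choose (r + k - 1) k * lam ^ k / Gamma (a * k + b) *
    (exp (-(s * t)) * t ^ (a * k + b - 1))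

section laplaceMlfTerm

variable {a b r lam s t : ℝ}

theorem exp_mul_rpow_mul_mlf_eq_tsum (hr : ∀ k : ℕ, r ≠ -k) (ht : 0 < t) :
    exp (-(s * t)) * t ^ (b - 1) * mlf a b r (lam * t ^ a) =
      ∑' k, laplaceMlfTerm a b r lam s k t := by
  rw [mlf, ← tsum_mul_left]
  refine tsum_congr fun k ↦ ?_
  have ht_pow : t ^ (a * k + b - 1) = t ^ (b - 1) * (t ^ a) ^ k := by
    rw [← rpow_mul_natCast ht.le, ← rpow_add ht]
    ring_nf
  rw [laplaceMlfTerm, Ring.choose_add_nat_sub_one_eq_Gamma hr, ht_pow]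
  ring

theorem integrableOn_laplaceMlfTerm (ha : 0 ≤ a) (hb : 0 < b) (hs : 0 < s) (k : ℕ) :
    IntegrableOn (laplaceMlfTerm a b r lam s k) (Ioi 0) :=
  (integrableOn_exp_neg_mul_mul_rpow hs (by positivity)).const_mul _

theorem integral_laplaceMlfTerm (ha : 0 ≤ a) (hb : 0 < b) (hs : 0 < s) (k : ℕ) :
    ∫ t in Ioi 0, laplaceMlfTerm a b r lam s k t =
      Ring.choose (r + k - 1) k * (lam * s ^ (-a)) ^ k * s ^ (-b) := by
  have hΓ : Gamma (a * k + b) ≠ 0 := (Gamma_pos_of_pos (by positivity)).ne'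
  simp only [laplaceMlfTerm]
  rw [integral_const_mul, integral_exp_neg_mul_mul_rpow hs (by positivity),
    show -(a * k + b) = -a * k + -b by ring, rpow_add hs, rpow_mul_natCast hs.le]
  field_simp
  ring

theorem norm_laplaceMlfTerm (hr : 0 < r) (ha : 0 ≤ a) (hb : 0 < b) (ht : 0 ≤ t) (k : ℕ) :
    ‖laplaceMlfTerm a b r lam s k t‖ = laplaceMlfTerm a b r |lam| s k t := by
  have hchoose : 0 ≤ Ring.choose (r + k - 1) k := by
    rw [Ring.choose_add_nat_sub_one_eq_Gamma fun k ↦ ((neg_nonpos.2 k.cast_nonneg).trans_lt hr).ne']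
    have := Gamma_pos_of_pos hr
    have := Gamma_pos_of_pos (by positivity : 0 < r + k)
    positivity
  have := Gamma_pos_of_pos (by positivity : 0 < a * k + b)
  simp only [laplaceMlfTerm, norm_mul, norm_div, norm_pow, norm_of_nonneg hchoose,
    norm_of_nonneg this.le, norm_of_nonneg (exp_pos _).le, norm_of_nonneg (rpow_nonneg ht _),
    Real.norm_eq_abs]

end laplaceMlfTerm

theorem Real.one_sub_mul_rpow_neg_rpow_neg_mul_rpow_neg {a b r lam s : ℝ} (hs : 0 < s)
    (hlam : lam < s ^ a) :
    (1 - lam * s ^ (-a)) ^ (-r) * s ^ (-b) = s ^ (a * r - b) / (s ^ a - lam) ^ r := by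
  have hsa : 0 < s ^ a := rpow_pos_of_pos hs a
  have h : 1 - lam * s ^ (-a) = (s ^ a - lam) / s ^ a := by
    rw [rpow_neg hs.le]
    field_simp
  rw [h, rpow_neg (div_nonneg (by linarith) hsa.le), div_rpow (by linarith) hsa.le, inv_div,
    ← rpow_mul hs.le, rpow_sub hs, rpow_neg hs.le]
  ring

/-- for a > 0, b > 0, r > 0, lam real and s > 0 with |lam| < s^a, the
Laplace transform of t^(b-1) * E^r_{a,b}(lam*t^a) converges and equals
s^(a*r-b) / (s^a - lam)^r. -/
theorem laplace_mlf_general (a b r lam s : ℝ) (ha : 0 < a) (hb : 0 < b) (hr : 0 < r)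
    (hs : 0 < s) (hlam : |lam| < s ^ a) :
    IntegrableOn (fun t : ℝ => Real.exp (-(s * t)) * t ^ (b - 1) * mlf a b r (lam * t ^ a))
      (Ioi 0) ∧
    ∫ t in Ioi (0 : ℝ), Real.exp (-(s * t)) * t ^ (b - 1) * mlf a b r (lam * t ^ a) =
      s ^ (a * r - b) / (s ^ a - lam) ^ r := by
  have hx_lt_one : ∀ {l : ℝ}, |l| = |lam| → |l * s ^ (-a)| < 1 := fun hl ↦ by
    rw [abs_mul, hl, abs_of_pos (rpow_pos_of_pos hs _), rpow_neg hs.le, ← div_eq_mul_inv]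
    exact (div_lt_one (rpow_pos_of_pos hs a)).2 hlam
  have h_int := integrableOn_laplaceMlfTerm (r := r) (lam := lam) ha.le hb hs
  have h_sum : Summable fun k ↦ ∫ t in Ioi 0, ‖laplaceMlfTerm a b r lam s k t‖ := by
    refine ((hasSum_choose_mul_pow r (hx_lt_one (abs_abs lam))).summable.mul_right
      (s ^ (-b))).congr fun k ↦ ?_
    rw [setIntegral_congr_fun measurableSet_Ioi fun t ht ↦ norm_laplaceMlfTerm hr ha.le hb
      (mem_Ioi.1 ht).le k, integral_laplaceMlfTerm ha.le hb hs]
  have h_eq : EqOn (fun t ↦ exp (-(s * t)) * t ^ (b - 1) * mlf a b r (lam * t ^ a))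
      (fun t ↦ ∑' k, laplaceMlfTerm a b r lam s k t) (Ioi 0) :=
    fun t ht ↦ exp_mul_rpow_mul_mlf_eq_tsum
      (fun k ↦ ((neg_nonpos.2 k.cast_nonneg).trans_lt hr).ne') ht
  refine ⟨IntegrableOn.congr_fun (integrable_tsum_of_summable_integral_norm h_int h_sum)
    h_eq.symm measurableSet_Ioi, ?_⟩
  rw [setIntegral_congr_fun measurableSet_Ioi h_eq,
    ← integral_tsum_of_summable_integral_norm h_int h_sum]
  simp_rw [integral_laplaceMlfTerm ha.le hb hs]
  rw [tsum_mul_right, (hasSum_choose_mul_pow r (hx_lt_one rfl)).tsum_eq,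
    one_sub_mul_rpow_neg_rpow_neg_mul_rpow_neg hs (lt_of_abs_lt hlam)]
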